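/- The Hausdorff dimension of the Minkowski–Stieltjes measure μ is strictly greater than 1/2. -/

import Mathlib

/-!
Salem's series gives `?(x / (1 + x)) = ?(x) / 2` and `?(1 / (1 + x)) = 1 - ?(x) / 2` on `[0, 1]`.
Applying these two maps `n` times to `{0, 1}` gives points `0 = t₀ < ⋯ < t_{2ⁿ} = 1` with
`?(tᵢ) = i / 2ⁿ`. The maps shrink `(y - x)² / ((1 + x) (1 + y))` by a factor of at most `9`, so
consecutive points are at least `3^{-(n+1)}` apart, and an interval of length `≤ 3^{-(n+1)}`
has `μ`-mass `≤ 3 · 2^{-n}`. Hence `μ(I) ≤ 12 |I|^{3/5}` (as `3^3 ≤ 2^5`), and the mass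
distribution principle bounds the dimension of every set of full measure below by `3/5 > 1/2`.
-/

open MeasureTheory Set
open scoped ENNReal NNReal

/-- The Gauss map `x ↦ 1/x mod 1` (with `0 ↦ 0`). -/
noncomputable def gaussMap (x : ℝ) : ℝ := if x = 0 then 0 else Int.fract x⁻¹

/-- The `(k+1)`-st continued fraction partial quotient `a_{k+1}(x)`. -/
noncomputable def cfDigit (k : ℕ) (x : ℝ) : ℕ := ⌊(gaussMap^[k] x)⁻¹⌋₊

/-- `cfSum n x = a_1(x) + ⋯ + a_n(x)`. -/
noncomputable def cfSum (n : ℕ) (x : ℝ) : ℕ := ∑ i ∈ Finset.range n, cfDigit i x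

/-- Minkowski's question mark function, defined by Salem's series
`?(x) = Σ_{k≥1} (-1)^{k-1} 2^{1-(a_1+⋯+a_k)}`, which is a finite sum for rational `x`
(the terms are cut off once the Gauss-map orbit reaches `0`). -/
noncomputable def mink (x : ℝ) : ℝ :=
  ∑' k : ℕ, if gaussMap^[k] x = 0 then 0 else
    (-1 : ℝ) ^ k * (2 : ℝ) ^ ((1 : ℤ) - (cfSum (k + 1) x : ℤ))

lemma gaussMap_mem_Ico (x : ℝ) : gaussMap x ∈ Ico (0 : ℝ) 1 := by
  unfold gaussMap
  split_ifs
  · simp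
  · exact ⟨Int.fract_nonneg _, Int.fract_lt_one _⟩

lemma gaussMap_iterate_zero (k : ℕ) : gaussMap^[k] 0 = 0 :=
  Function.iterate_fixed (by simp [gaussMap]) k

lemma cfDigit_succ (k : ℕ) (x : ℝ) : cfDigit (k + 1) x = cfDigit k (gaussMap x) := by
  rw [cfDigit, cfDigit, Function.iterate_succ_apply]

lemma cfSum_succ (n : ℕ) (x : ℝ) : cfSum (n + 1) x = cfDigit 0 x + cfSum n (gaussMap x) := by
  simp only [cfSum, Finset.sum_range_succ', cfDigit_succ, add_comm]

lemma two_le_two_pow_cfDigit_zero {x : ℝ} (hx₀ : 0 < x) (hx₁ : x ≤ 1) :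
    (2 : ℝ) ≤ 2 ^ cfDigit 0 x :=
  le_self_pow₀ one_le_two <| Nat.one_le_iff_ne_zero.1 <| Nat.le_floor <| by
    simpa using (one_le_inv₀ hx₀).2 hx₁

noncomputable def salemTerm (x : ℝ) (k : ℕ) : ℝ :=
  if gaussMap^[k] x = 0 then 0 else (-1 : ℝ) ^ k * (2 : ℝ) ^ ((1 : ℤ) - (cfSum (k + 1) x : ℤ))

lemma salemTerm_zero_of_ne_zero {x : ℝ} (hx : x ≠ 0) : salemTerm x 0 = 2 / 2 ^ cfDigit 0 x := by
  simp [salemTerm, hx, cfSum, zpow_sub₀, div_eq_mul_inv]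

lemma salemTerm_succ (x : ℝ) (k : ℕ) :
    salemTerm x (k + 1) = -(salemTerm (gaussMap x) k / 2 ^ cfDigit 0 x) := by
  rw [salemTerm, salemTerm, Function.iterate_succ_apply]
  split_ifs
  · simp
  · rw [cfSum_succ, Nat.cast_add, show (1 : ℤ) - (cfDigit 0 x + cfSum (k + 1) (gaussMap x)) =
      (1 - cfSum (k + 1) (gaussMap x)) - cfDigit 0 x by ring, zpow_sub₀ two_ne_zero, zpow_natCast]
    ring

lemma abs_salemTerm_le {x : ℝ} (hx : x ∈ Icc (0 : ℝ) 1) (k : ℕ) : |salemTerm x k| ≤ 2⁻¹ ^ k := by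
  induction k generalizing x with
  | zero =>
    rcases hx.1.eq_or_lt with rfl | hx₀
    · simp [salemTerm]
    rw [salemTerm_zero_of_ne_zero hx₀.ne', abs_of_pos (by positivity), pow_zero,
      div_le_one (by positivity)]
    exact two_le_two_pow_cfDigit_zero hx₀ hx.2
  | succ k ih =>
    rcases hx.1.eq_or_lt with rfl | hx₀
    · simp [salemTerm, gaussMap_iterate_zero]
    have hG := gaussMap_mem_Ico x
    have h2 := two_le_two_pow_cfDigit_zero hx₀ hx.2
    rw [salemTerm_succ, abs_neg, abs_div, abs_of_pos (by positivity : (0 : ℝ) < 2 ^ cfDigit 0 x),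
      div_le_iff₀ (by positivity), pow_succ']
    calc |salemTerm (gaussMap x) k| ≤ 2⁻¹ ^ k := ih ⟨hG.1, hG.2.le⟩
      _ ≤ 2⁻¹ * 2⁻¹ ^ k * 2 ^ cfDigit 0 x := by
          nlinarith [pow_pos (by norm_num : (0 : ℝ) < 2⁻¹) k]

lemma summable_salemTerm {x : ℝ} (hx : x ∈ Icc (0 : ℝ) 1) : Summable (salemTerm x) :=
  .of_norm_bounded (summable_geometric_of_lt_one (by norm_num) (by norm_num))
    (abs_salemTerm_le hx)

lemma mink_eq_tsum_salemTerm (x : ℝ) : mink x = ∑' k, salemTerm x k := rfl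

lemma mink_zero : mink 0 = 0 := by
  simp [mink_eq_tsum_salemTerm, salemTerm, gaussMap_iterate_zero]

/-- One step of the Gauss map shifts Salem's series by one term. -/
lemma mink_of_ne_zero {x : ℝ} (hx : x ≠ 0) :
    mink x = (2 - mink (gaussMap x)) / 2 ^ cfDigit 0 x := by
  have hG := gaussMap_mem_Ico x
  have hsum : Summable fun k => salemTerm x (k + 1) := by
    simp only [salemTerm_succ]
    exact ((summable_salemTerm ⟨hG.1, hG.2.le⟩).div_const _).neg
  rw [mink_eq_tsum_salemTerm, tsum_eq_zero_add' hsum, salemTerm_zero_of_ne_zero hx]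
  simp only [salemTerm_succ, tsum_neg, tsum_div_const, ← mink_eq_tsum_salemTerm]
  ring

lemma mink_one : mink 1 = 1 := by
  have h1 : gaussMap 1 = 0 := by simp [gaussMap]
  have h2 : cfDigit 0 1 = 1 := by simp [cfDigit]
  rw [mink_of_ne_zero one_ne_zero, h1, h2, mink_zero]
  norm_num

lemma mink_div_one_add {x : ℝ} (hx : 0 ≤ x) : mink (x / (1 + x)) = mink x / 2 := by
  rcases hx.eq_or_lt with rfl | hx₀
  · simp [mink_zero]
  have hinv : (x / (1 + x))⁻¹ = x⁻¹ + 1 := by field_simp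
  have hG : gaussMap (x / (1 + x)) = gaussMap x := by
    simp only [gaussMap, hx₀.ne', (by positivity : x / (1 + x) ≠ 0), if_false, hinv,
      Int.fract_add_one]
  have hd : cfDigit 0 (x / (1 + x)) = cfDigit 0 x + 1 := by
    simp only [cfDigit, Function.iterate_zero, id_eq, hinv]
    exact Nat.floor_add_one (by positivity)
  rw [mink_of_ne_zero (by positivity), mink_of_ne_zero hx₀.ne', hG, hd, pow_succ, div_div]

lemma mink_inv_one_add {x : ℝ} (hx : x ∈ Icc (0 : ℝ) 1) : mink (1 + x)⁻¹ = 1 - mink x / 2 := by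
  have hx₀ : (1 + x)⁻¹ ≠ 0 := inv_ne_zero (by linarith [hx.1])
  rcases hx.2.eq_or_lt with rfl | hx₁
  · -- `gaussMap 2⁻¹ = 0 ≠ 1`, but `2⁻¹ = 1 / (1 + 1)` is covered by `mink_div_one_add`.
    have := mink_div_one_add zero_le_one
    norm_num [mink_one] at this ⊢
    exact this
  have hG : gaussMap (1 + x)⁻¹ = x := by
    rw [gaussMap, if_neg hx₀, inv_inv, add_comm, Int.fract_add_one,
      Int.fract_eq_self.2 ⟨hx.1, hx₁⟩]
  have hd : cfDigit 0 (1 + x)⁻¹ = 1 := by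
    simp only [cfDigit, Function.iterate_zero, id_eq, inv_inv]
    exact Nat.floor_eq_iff (by linarith [hx.1]) |>.2
      ⟨by push_cast; linarith [hx.1], by push_cast; linarith⟩
  rw [mink_of_ne_zero hx₀, hG, hd]
  ring

/-- The Möbius maps `x ↦ x / (1 + x)` and `x ↦ (1 + x)⁻¹` shrink this squared length on `[0, 1]`
by a factor of at most `9`, whereas they may shrink plain length by `4`. -/
noncomputable def gapSq (x y : ℝ) : ℝ := (y - x) ^ 2 / ((1 + x) * (1 + y))

lemma gapSq_nonneg {x y : ℝ} (hx : 0 ≤ x) (hy : 0 ≤ y) : 0 ≤ gapSq x y := by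
  unfold gapSq; positivity

lemma gapSq_le_sq_sub {x y : ℝ} (hx : 0 ≤ x) (hy : 0 ≤ y) : gapSq x y ≤ (y - x) ^ 2 :=
  div_le_self (sq_nonneg _) (one_le_mul_of_one_le_of_one_le (by linarith) (by linarith))

lemma gapSq_div_one_add {x y : ℝ} (hx : x ∈ Icc (0 : ℝ) 1) (hy : y ∈ Icc (0 : ℝ) 1) :
    gapSq x y / 9 ≤ gapSq (x / (1 + x)) (y / (1 + y)) := by
  obtain ⟨hx₀, hx₁⟩ := hx
  obtain ⟨hy₀, hy₁⟩ := hy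
  have key : gapSq (x / (1 + x)) (y / (1 + y)) = gapSq x y / ((1 + 2 * x) * (1 + 2 * y)) := by
    unfold gapSq; field_simp; ring
  rw [key]
  exact div_le_div_of_nonneg_left (gapSq_nonneg hx₀ hy₀) (by positivity) (by nlinarith)

lemma gapSq_inv_one_add {x y : ℝ} (hx : x ∈ Icc (0 : ℝ) 1) (hy : y ∈ Icc (0 : ℝ) 1) :
    gapSq x y / 9 ≤ gapSq (1 + y)⁻¹ (1 + x)⁻¹ := by
  obtain ⟨hx₀, hx₁⟩ := hx
  obtain ⟨hy₀, hy₁⟩ := hy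
  have key : gapSq (1 + y)⁻¹ (1 + x)⁻¹ = gapSq x y / ((2 + x) * (2 + y)) := by
    unfold gapSq; field_simp; ring
  rw [key]
  exact div_le_div_of_nonneg_left (gapSq_nonneg hx₀ hy₀) (by positivity) (by nlinarith)

lemma div_one_add_mem_Icc {x : ℝ} (hx : x ∈ Icc (0 : ℝ) 1) : x / (1 + x) ∈ Icc (0 : ℝ) 1 :=
  ⟨by have := hx.1; positivity, div_le_one_of_le₀ (by linarith [hx.1]) (by linarith [hx.1])⟩

lemma inv_one_add_mem_Icc {x : ℝ} (hx : x ∈ Icc (0 : ℝ) 1) : (1 + x)⁻¹ ∈ Icc (0 : ℝ) 1 :=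
  ⟨by have := hx.1; positivity, inv_le_one_of_one_le₀ (by linarith [hx.1])⟩

structure IsMinkPartition (N : ℕ) (ℓ : ℝ) (t : ℕ → ℝ) : Prop where
  zero : t 0 = 0
  last : t N = 1
  mem : ∀ i ≤ N, t i ∈ Icc (0 : ℝ) 1
  mink_eq : ∀ i ≤ N, mink (t i) = i / N
  mono : ∀ i < N, t i ≤ t (i + 1)
  gap : ∀ i < N, ℓ ≤ gapSq (t i) (t (i + 1))

lemma isMinkPartition_one : IsMinkPartition 1 2⁻¹ (fun i => i) where
  zero := Nat.cast_zero
  last := Nat.cast_one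
  mem i hi := by interval_cases i <;> simp
  mink_eq i hi := by interval_cases i <;> simp [mink_zero, mink_one]
  mono i _ := by simp
  gap i hi := by interval_cases i; norm_num [gapSq]

/-- The second half runs backwards because `x ↦ (1 + x)⁻¹` reverses order; on a partition both
halves give `1 / 2` at `i = N`. -/
noncomputable def doublePartition (N : ℕ) (t : ℕ → ℝ) (i : ℕ) : ℝ :=
  if i ≤ N then t i / (1 + t i) else (1 + t (2 * N - i))⁻¹

namespace IsMinkPartition

variable {N : ℕ} {ℓ : ℝ} {t : ℕ → ℝ}

lemma pos (h : IsMinkPartition N ℓ t) : 0 < N :=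
  Nat.pos_of_ne_zero fun hN => by simpa [hN, h.zero] using h.last

lemma doublePartition_of_ge (h : IsMinkPartition N ℓ t) {i : ℕ} (hi : N ≤ i) :
    doublePartition N t i = (1 + t (2 * N - i))⁻¹ := by
  rcases hi.eq_or_lt with rfl | hi
  · rw [doublePartition, if_pos le_rfl, show 2 * N - N = N by omega, h.last]
    norm_num
  · exact if_neg (by omega)

theorem double (h : IsMinkPartition N ℓ t) :
    IsMinkPartition (2 * N) (ℓ / 9) (doublePartition N t) where
  zero := by simp [doublePartition, h.zero]
  last := by rw [h.doublePartition_of_ge (by omega), Nat.sub_self, h.zero]; norm_num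
  mem i hi := by
    by_cases hiN : i ≤ N
    · rw [doublePartition, if_pos hiN]
      exact div_one_add_mem_Icc (h.mem i hiN)
    · rw [h.doublePartition_of_ge (by omega)]
      exact inv_one_add_mem_Icc (h.mem _ (by omega))
  mink_eq i hi := by
    have hN : (N : ℝ) ≠ 0 := by exact_mod_cast h.pos.ne'
    by_cases hiN : i ≤ N
    · rw [doublePartition, if_pos hiN, mink_div_one_add (h.mem i hiN).1, h.mink_eq i hiN]
      push_cast
      field_simp
    · rw [h.doublePartition_of_ge (by omega), mink_inv_one_add (h.mem _ (by omega)),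
        h.mink_eq _ (by omega), Nat.cast_sub (by omega)]
      push_cast
      field_simp
      ring
  mono i hi := by
    rcases lt_or_ge i N with hiN | hiN
    · rw [doublePartition, doublePartition, if_pos hiN.le, if_pos (Nat.succ_le_of_lt hiN)]
      have h₀ := (h.mem i hiN.le).1
      have h₁ := (h.mem (i + 1) hiN).1
      have := h.mono i hiN
      rw [div_le_div_iff₀ (by positivity) (by positivity)]
      nlinarith
    · rw [h.doublePartition_of_ge hiN, h.doublePartition_of_ge (by omega),
        show 2 * N - i = 2 * N - (i + 1) + 1 by omega]
      have h₀ := (h.mem (2 * N - (i + 1)) (by omega)).1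
      exact inv_anti₀ (by positivity) (by linarith [h.mono (2 * N - (i + 1)) (by omega)])
  gap i hi := by
    rcases lt_or_ge i N with hiN | hiN
    · rw [doublePartition, doublePartition, if_pos hiN.le, if_pos (Nat.succ_le_of_lt hiN)]
      exact (div_le_div_of_nonneg_right (h.gap i hiN) (by norm_num)).trans
        (gapSq_div_one_add (h.mem i hiN.le) (h.mem (i + 1) hiN))
    · rw [h.doublePartition_of_ge hiN, h.doublePartition_of_ge (by omega),
        show 2 * N - i = 2 * N - (i + 1) + 1 by omega]
      exact (div_le_div_of_nonneg_right (h.gap _ (by omega)) (by norm_num)).trans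
        (gapSq_inv_one_add (h.mem _ (by omega)) (h.mem _ (by omega)))

lemma add_le_succ (h : IsMinkPartition N ℓ t) {ρ : ℝ} (hρ : 0 ≤ ρ) (hρℓ : ρ ^ 2 ≤ ℓ) {i : ℕ}
    (hi : i < N) : t i + ρ ≤ t (i + 1) := by
  have hsq : ρ ^ 2 ≤ (t (i + 1) - t i) ^ 2 :=
    (hρℓ.trans (h.gap i hi)).trans (gapSq_le_sq_sub (h.mem i hi.le).1 (h.mem (i + 1) hi).1)
  have := (pow_le_pow_iff_left₀ hρ (sub_nonneg.2 (h.mono i hi)) two_ne_zero).1 hsq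
  linarith

end IsMinkPartition

theorem exists_isMinkPartition (n : ℕ) : ∃ t, IsMinkPartition (2 ^ n) (9⁻¹ ^ n / 2) t := by
  induction n with
  | zero => exact ⟨_, by simpa using isMinkPartition_one⟩
  | succ n ih =>
    obtain ⟨t, ht⟩ := ih
    refine ⟨doublePartition (2 ^ n) t, ?_⟩
    convert ht.double using 1 <;> ring

theorem le_dimH_of_measureReal_Icc_le {μ : Measure ℝ} [IsFiniteMeasure μ] {C r : ℝ} {d : ℝ≥0}
    (hC : 0 < C) (hr : 0 < r)
    (h : ∀ u v, u ≤ v → v - u ≤ r → μ.real (Icc u v) ≤ C * (v - u) ^ (d : ℝ))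
    {A : Set ℝ} (hA : μ A ≠ 0) : (d : ℝ≥0∞) ≤ dimH A := by
  have hle : ENNReal.ofReal C⁻¹ • μ ≤ μH[d] := by
    refine Measure.le_hausdorffMeasure _ _ (ENNReal.ofReal r) (by simpa using hr) fun s hs => ?_
    rcases s.eq_empty_or_nonempty with rfl | hne
    · simp
    have hb : Bornology.IsBounded s :=
      Metric.isBounded_iff_ediam_ne_top.2 (ne_top_of_le_ne_top ENNReal.ofReal_ne_top hs)
    have hδ₀ : 0 ≤ sSup s - sInf s := sub_nonneg.2 (Real.sInf_le_sSup s hb.bddBelow hb.bddAbove)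
    rw [Real.ediam_eq hb] at hs ⊢
    have hδ := h _ _ (sub_nonneg.1 hδ₀) ((ENNReal.ofReal_le_ofReal_iff hr.le).1 hs)
    calc (ENNReal.ofReal C⁻¹ • μ) s = ENNReal.ofReal (C⁻¹ * μ.real s) := by
          rw [Measure.smul_apply, smul_eq_mul, ENNReal.ofReal_mul (by positivity),
            ofReal_measureReal]
      _ ≤ ENNReal.ofReal (C⁻¹ * μ.real (Icc (sInf s) (sSup s))) :=
          ENNReal.ofReal_le_ofReal <| mul_le_mul_of_nonneg_left
            (measureReal_mono hb.subset_Icc_sInf_sSup) (by positivity)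
      _ ≤ ENNReal.ofReal ((sSup s - sInf s) ^ (d : ℝ)) :=
          ENNReal.ofReal_le_ofReal ((inv_mul_le_iff₀ hC).2 hδ)
      _ = ENNReal.ofReal (sSup s - sInf s) ^ (d : ℝ) :=
          (ENNReal.ofReal_rpow_of_nonneg hδ₀ d.2).symm
  refine le_dimH_of_hausdorffMeasure_ne_zero fun h0 => hA ?_
  have := Measure.le_iff'.1 hle A
  rw [h0, Measure.smul_apply, smul_eq_mul, nonpos_iff_eq_zero, mul_eq_zero] at this
  exact this.resolve_left (by simpa using hC)

theorem measureReal_Icc_le_mul_rpow {μ : Measure ℝ} {r ρ C d : ℝ}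
    (hr₀ : 0 < r) (hr₁ : r < 1) (hρ : 0 < ρ) (hd : 0 < d) (hρr : ρ ≤ r ^ d)
    (h : ∀ (n : ℕ) (u v : ℝ), v - u ≤ r ^ n → μ.real (Icc u v) ≤ C * ρ ^ n)
    {u v : ℝ} (huv : u ≤ v) (hvu : v - u ≤ 1) : μ.real (Icc u v) ≤ C / ρ * (v - u) ^ d := by
  rcases huv.eq_or_lt with rfl | huv
  · have hρ₁ : ρ < 1 := hρr.trans_lt (Real.rpow_lt_one hr₀.le hr₁ hd)
    rw [sub_self, Real.zero_rpow hd.ne', mul_zero]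
    have hlim := (tendsto_pow_atTop_nhds_zero_of_lt_one hρ.le hρ₁).const_mul C
    rw [mul_zero] at hlim
    exact ge_of_tendsto' hlim fun n => h n u u (by simp; positivity)
  have hC : 0 ≤ C := by simpa using measureReal_nonneg.trans (h 0 0 0 (by simp))
  obtain ⟨n, hn, hn'⟩ := exists_nat_pow_near_of_lt_one (sub_pos.2 huv) hvu hr₀ hr₁
  calc μ.real (Icc u v) ≤ C * ρ ^ n := h n u v hn'
    _ = C / ρ * ρ ^ (n + 1) := by field_simp; ring
    _ ≤ C / ρ * (r ^ d) ^ (n + 1) := by gcongr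
    _ = C / ρ * (r ^ (n + 1)) ^ d := by rw [Real.rpow_pow_comm hr₀.le]
    _ ≤ C / ρ * (v - u) ^ d := by gcongr

theorem measureReal_Icc_le_of_cdf_partition {μ : Measure ℝ} [IsProbabilityMeasure μ] {N : ℕ}
    (hN : 0 < N) {t : ℕ → ℝ} {r : ℝ} (hr : 0 < r)
    (hcdf : ∀ i ≤ N, μ.real (Iic (t i)) = i / N) (hgap : ∀ i < N, t i + r ≤ t (i + 1))
    {u v : ℝ} (huv : v - u ≤ r) : μ.real (Icc u v) ≤ 3 / N := by
  rcases lt_or_ge v u with hvu | hvu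
  · rw [Icc_eq_empty_of_lt hvu, measureReal_empty]
    positivity
  set j := Nat.findGreatest (fun i => t i ≤ u) N with hj
  have hjN : j ≤ N := Nat.findGreatest_le N
  have hupper : μ.real (Iic v) ≤ (j + 2) / N := by
    by_cases hjN' : j + 2 ≤ N
    · have hu : u < t (j + 1) :=
        lt_of_not_ge (Nat.findGreatest_is_greatest (Nat.lt_succ_self j) (by omega))
      calc μ.real (Iic v) ≤ μ.real (Iic (t (j + 2))) :=
            measureReal_mono (Iic_subset_Iic.2 (by linarith [hgap (j + 1) (by omega)]))
        _ = (j + 2) / N := by rw [hcdf _ hjN']; push_cast; ring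
    · calc μ.real (Iic v) ≤ 1 := measureReal_le_one
        _ ≤ (j + 2) / N := by
          rw [le_div_iff₀ (by positivity), one_mul]
          exact_mod_cast (by omega : N ≤ j + 2)
  have hlower : (j - 1) / N ≤ μ.real (Iio u) := by
    rcases Nat.eq_zero_or_pos j with hj0 | hj0
    · rw [hj0, Nat.cast_zero, zero_sub]
      exact (div_nonpos_of_nonpos_of_nonneg (by norm_num) (by positivity)).trans measureReal_nonneg
    · have htj : t j ≤ u := Nat.findGreatest_of_ne_zero hj.symm hj0.ne'
      have hgapj := hgap (j - 1) (by omega)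
      rw [Nat.sub_add_cancel hj0] at hgapj
      calc ((j : ℝ) - 1) / N = μ.real (Iic (t (j - 1))) := by
            rw [hcdf _ (by omega), Nat.cast_sub hj0, Nat.cast_one]
        _ ≤ μ.real (Iio u) := measureReal_mono (Iic_subset_Iio.2 (by linarith))
  have hsplit : μ.real (Iio u) + μ.real (Icc u v) = μ.real (Iic v) := by
    rw [← measureReal_union ((Iio_disjoint_Ici le_rfl).mono_right Icc_subset_Ici_self)
      measurableSet_Icc, Iio_union_Icc_eq_Iic hvu]
  calc μ.real (Icc u v) = μ.real (Iic v) - μ.real (Iio u) := by linarith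
    _ ≤ (j + 2) / N - (j - 1) / N := sub_le_sub hupper hlower
    _ = 3 / N := by ring

lemma measureReal_Iic_eq_mink {μ : Measure ℝ} [IsProbabilityMeasure μ]
    (hdist : ∀ x ∈ Icc (0 : ℝ) 1, μ (Icc 0 x) = ENNReal.ofReal (mink x))
    {x : ℝ} (hx : x ∈ Icc (0 : ℝ) 1) (hmink : 0 ≤ mink x) : μ.real (Iic x) = mink x := by
  have hsupp : μ (Icc 0 1)ᶜ = 0 := by
    rw [prob_compl_eq_zero_iff measurableSet_Icc, hdist 1 ⟨zero_le_one, le_rfl⟩, mink_one,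
      ENNReal.ofReal_one]
  have hIic : Iic x ∩ Icc 0 1 = Icc 0 x := by
    ext y
    simp only [mem_inter_iff, mem_Iic, mem_Icc]
    exact ⟨fun ⟨hyx, hy₀, _⟩ => ⟨hy₀, hyx⟩, fun ⟨hy₀, hyx⟩ => ⟨hyx, hy₀, hyx.trans hx.2⟩⟩
  rw [measureReal_def, ← measure_inter_conull hsupp, hIic, hdist x hx, ENNReal.toReal_ofReal hmink]

theorem measureReal_Icc_le_of_mink {μ : Measure ℝ} [IsProbabilityMeasure μ]
    (hdist : ∀ x ∈ Icc (0 : ℝ) 1, μ (Icc 0 x) = ENNReal.ofReal (mink x)) (n : ℕ) {u v : ℝ}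
    (huv : v - u ≤ 3⁻¹ ^ (n + 1)) : μ.real (Icc u v) ≤ 3 / 2 ^ n := by
  obtain ⟨t, ht⟩ := exists_isMinkPartition n
  have hcdf : ∀ i ≤ 2 ^ n, μ.real (Iic (t i)) = i / (2 ^ n : ℕ) := fun i hi => by
    rw [measureReal_Iic_eq_mink hdist (ht.mem i hi) (by rw [ht.mink_eq i hi]; positivity),
      ht.mink_eq i hi]
  have hsq : (3⁻¹ ^ (n + 1) : ℝ) ^ 2 ≤ 9⁻¹ ^ n / 2 := by
    have := pow_nonneg (by norm_num : (0 : ℝ) ≤ 9⁻¹) n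
    rw [← pow_mul, mul_comm, pow_mul, pow_succ]
    norm_num
    linarith
  have hgap i (hi : i < 2 ^ n) := ht.add_le_succ (by positivity) hsq hi
  simpa using measureReal_Icc_le_of_cdf_partition ht.pos (by positivity) hcdf hgap huv

theorem minkMeasure_dimH_gt_half_general (μ : Measure ℝ) [IsProbabilityMeasure μ]
    (hdist : ∀ x ∈ Icc (0 : ℝ) 1, μ (Icc 0 x) = ENNReal.ofReal (mink x)) :
    (2⁻¹ : ℝ≥0∞) < sInf {d : ℝ≥0∞ | ∃ A : Set ℝ, MeasurableSet A ∧ μ A = 1 ∧ dimH A = d} := by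
  have hscale (n : ℕ) (u v : ℝ) (huv : v - u ≤ 3⁻¹ ^ n) : μ.real (Icc u v) ≤ 6 * 2⁻¹ ^ n := by
    cases n with
    | zero => simpa using measureReal_le_one.trans (by norm_num : (1 : ℝ) ≤ 6)
    | succ n =>
      calc μ.real (Icc u v) ≤ 3 / 2 ^ n := measureReal_Icc_le_of_mink hdist n huv
        _ = 6 * 2⁻¹ ^ (n + 1) := by rw [inv_pow, pow_succ]; field_simp; norm_num
  have hexp : (2⁻¹ : ℝ) ≤ 3⁻¹ ^ ((3 / 5 : ℝ≥0) : ℝ) := by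
    rw [← pow_le_pow_iff_left₀ (by norm_num) (by positivity) (by norm_num : 5 ≠ 0),
      ← Real.rpow_mul_natCast (by norm_num)]
    norm_num
  have hpow (u v : ℝ) (huv : u ≤ v) (hvu : v - u ≤ 1) :
      μ.real (Icc u v) ≤ 6 / 2⁻¹ * (v - u) ^ ((3 / 5 : ℝ≥0) : ℝ) :=
    measureReal_Icc_le_mul_rpow (by norm_num) (by norm_num) (by norm_num) (by norm_num) hexp
      hscale huv hvu
  have hhalf : (2⁻¹ : ℝ≥0∞) < ((3 / 5 : ℝ≥0) : ℝ≥0∞) := by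
    rw [← ENNReal.coe_ofNat, ← ENNReal.coe_inv two_ne_zero, ENNReal.coe_lt_coe]
    norm_num
  refine hhalf.trans_le (le_sInf ?_)
  rintro _ ⟨A, -, hA, rfl⟩
  exact le_dimH_of_measureReal_Icc_le (by norm_num) one_pos hpow (by simp [hA])

/-- The Hausdorff dimension of the Minkowski–Stieltjes measure is `> 1/2`. -/
theorem minkMeasure_dimH_gt_half (μ : Measure ℝ) [IsProbabilityMeasure μ]
    (hdist : ∀ x ∈ Icc (0 : ℝ) 1, μ (Icc 0 x) = ENNReal.ofReal (mink x))
    (hsupp : μ (Icc (0 : ℝ) 1) = 1) :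
    (2⁻¹ : ℝ≥0∞) < sInf {d : ℝ≥0∞ | ∃ A : Set ℝ, MeasurableSet A ∧ μ A = 1 ∧ dimH A = d} :=
  minkMeasure_dimH_gt_half_general μ hdist
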